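/- Williamson-type diagonalization of positive definite symplectic matrices: if P is symmetric, positive definite, and symplectic, then there exists a symplectic rotation U ∈ Sp(2n,ℝ) ∩ O(2n,ℝ) and a diagonal symplectic matrix Δ = ⊕ₖ diag(λₖ, λₖ⁻¹) with λₖ > 0 such that P = Uᵀ Δ U. -/

import Mathlib

open Matrix
open scoped ComplexOrder

/-- The standard symplectic matrix in the ordering `(x₁,p₁,...,xₙ,pₙ)`:
`J = ⊕ₖ [[0,1],[-1,0]]`. -/
def StdJ (n : ℕ) : Matrix (Fin (2*n)) (Fin (2*n)) ℝ :=
  Matrix.of fun i j =>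
    if i.val % 2 = 0 ∧ j.val = i.val + 1 then 1
    else if i.val % 2 = 1 ∧ i.val = j.val + 1 then -1 else 0

/-- A real `2n×2n` matrix is symplectic if `Sᵀ J S = J`. -/
def IsSymplectic {n : ℕ} (S : Matrix (Fin (2*n)) (Fin (2*n)) ℝ) : Prop :=
  Sᵀ * StdJ n * S = StdJ n
/-- The diagonal matrix `⊕ₖ diag(λₖ, λₖ⁻¹)` in the ordering `(x₁,p₁,...,xₙ,pₙ)`. -/
noncomputable def pairDiag {m : ℕ} (lam : Fin m → ℝ) : Matrix (Fin (2*m)) (Fin (2*m)) ℝ :=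
  Matrix.diagonal fun i =>
    if i.val % 2 = 0 then lam ⟨i.val / 2, by have := i.isLt; omega⟩
    else (lam ⟨i.val / 2, by have := i.isLt; omega⟩)⁻¹

-- ==== auxiliary lemmas ====
open scoped RealInnerProductSpace
open Module

theorem StdJ_transpose (n : ℕ) : (StdJ n)ᵀ = -(StdJ n) := by
  ext i j
  simp only [StdJ, transpose_apply, Matrix.neg_apply, of_apply]
  split_ifs <;> first | (exfalso; omega) | norm_num

theorem StdJ_mul_self (n : ℕ) : StdJ n * StdJ n = -1 := by
  ext i j
  rw [mul_apply]
  have hi := i.isLt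
  set i' : Fin (2*n) := ⟨i.val + 1 - 2 * (i.val % 2), by omega⟩ with hi'
  rw [Finset.sum_eq_single i']
  · simp only [StdJ, of_apply, Matrix.neg_apply, one_apply, hi', Fin.ext_iff]
    split_ifs <;> first | (exfalso; omega) | norm_num
  · intro b _ hb
    have hb' : b.val ≠ i.val + 1 - 2 * (i.val % 2) := fun h => hb (Fin.ext h)
    simp only [StdJ, of_apply]
    split_ifs <;> first | (exfalso; omega) | norm_num
  · intro h; exact absurd (Finset.mem_univ i') h

theorem sandwich_aux {m : ℕ} (U A : Matrix (Fin m) (Fin m) ℝ) (h : Uᵀ * U = 1) :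
    Uᵀ * (U * A * Uᵀ) * U = A := by
  calc Uᵀ * (U * A * Uᵀ) * U = (Uᵀ * U) * A * (Uᵀ * U) := by noncomm_ring
  _ = A := by rw [h, one_mul, mul_one]

theorem williamson_key : ∀ (n : ℕ) (V : Type) (_ : NormedAddCommGroup V)
    (_ : InnerProductSpace ℝ V) (_ : FiniteDimensional ℝ V)
    (J P : V →ₗ[ℝ] V)
    (hdim : finrank ℝ V = 2 * n)
    (hJ2 : ∀ x, J (J x) = -x)
    (hJadj : ∀ x y, ⟪J x, y⟫ = - ⟪x, J y⟫)
    (hPsym : ∀ x y, ⟪P x, y⟫ = ⟪x, P y⟫)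
    (hPpos : ∀ x, x ≠ 0 → 0 < ⟪P x, x⟫)
    (hrel : ∀ x, P (J (P x)) = J x),
    ∃ (e : Fin n → V) (lam : Fin n → ℝ),
      (∀ k, 0 < lam k) ∧ (∀ k, P (e k) = lam k • e k) ∧
      (∀ k l, ⟪e k, e l⟫ = if k = l then 1 else 0) ∧
      (∀ k l, ⟪e k, J (e l)⟫ = 0) := by
  intro n
  induction n with
  | zero =>
    intro V _ _ _ J P hdim hJ2 hJadj hPsym hPpos hrel
    exact ⟨finZeroElim, finZeroElim, fun k => k.elim0, fun k => k.elim0,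
      fun k => k.elim0, fun k => k.elim0⟩
  | succ n IH =>
    intro V _ _ _ J P hdim hJ2 hJadj hPsym hPpos hrel
    have hJiso : ∀ x y : V, ⟪J x, J y⟫ = ⟪x, y⟫ := by
      intro x y
      rw [hJadj x (J y), hJ2, inner_neg_right, neg_neg]
    have hsymm : P.IsSymmetric := fun x y => hPsym x y
    set b := hsymm.eigenvectorBasis hdim with hb
    set i0 : Fin (2 * (n+1)) := ⟨0, by omega⟩ with hi0
    set v := b i0 with hv
    set μ := hsymm.eigenvalues hdim i0 with hμ
    have hPv : P v = μ • v := by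
      have h := hsymm.apply_eigenvectorBasis hdim i0
      exact_mod_cast h
    have hvnorm : ⟪v, v⟫ = 1 := by
      have h1 : ‖v‖ = 1 := b.orthonormal.1 i0
      rw [real_inner_self_eq_norm_sq, h1]; norm_num
    have hv0 : v ≠ 0 := by
      intro h; rw [h, inner_zero_left] at hvnorm; norm_num at hvnorm
    have hμpos : 0 < μ := by
      have := hPpos v hv0
      rwa [hPv, real_inner_smul_left, hvnorm, mul_one] at this
    have hPJv : P (J v) = μ⁻¹ • J v := by
      have h := hrel v
      rw [hPv, LinearMap.map_smul, LinearMap.map_smul] at h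
      rw [eq_inv_smul_iff₀ (ne_of_gt hμpos)]
      exact h
    have hvJv : ⟪v, J v⟫ = 0 := by
      have h1 := hJadj v v
      have h2 := real_inner_comm v (J v)
      linarith
    -- the orthogonal complement of span {v, J v}
    set K := Submodule.span ℝ {v, J v} with hK
    set W := Kᗮ with hW
    have memW : ∀ x : V, x ∈ W ↔ ⟪v, x⟫ = 0 ∧ ⟪J v, x⟫ = 0 := by
      intro x
      rw [hW, Submodule.mem_orthogonal]
      constructor
      · intro h
        exact ⟨h v (Submodule.subset_span (by simp)),
               h (J v) (Submodule.subset_span (by simp))⟩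
      · rintro ⟨h1, h2⟩ u hu
        induction hu using Submodule.span_induction with
        | mem u hu => rcases hu with h | h <;> subst h <;> assumption
        | zero => simp
        | add u w _ _ hu hw => rw [inner_add_left, hu, hw, add_zero]
        | smul c u _ hu => rw [real_inner_smul_left, hu, mul_zero]
    have hJW : ∀ x ∈ W, J x ∈ W := by
      intro x hx
      rw [memW] at hx ⊢
      constructor
      · have := hJadj v x; rw [hx.2] at this; linarith
      · rw [hJiso]; exact hx.1
    have hPW : ∀ x ∈ W, P x ∈ W := by
      intro x hx
      rw [memW] at hx ⊢
      constructor
      · rw [← hPsym v x, hPv, real_inner_smul_left, hx.1, mul_zero]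
      · rw [← hPsym (J v) x, hPJv, real_inner_smul_left, hx.2, mul_zero]
    have hJvJv : ⟪J v, J v⟫ = 1 := by rw [hJiso]; exact hvnorm
    have hONpair : Orthonormal ℝ ![v, J v] := by
      rw [orthonormal_iff_ite]
      intro i j
      fin_cases i <;> fin_cases j <;>
        simp [hvnorm, hvJv, hJvJv, real_inner_comm (J v) v] <;>
        first
          | rfl
          | (rw [real_inner_comm]; simpa using hvJv)
          | simpa using hvJv
          | (left; rw [norm_eq_sqrt_real_inner, hvnorm, Real.sqrt_one])
          | (left; rw [norm_eq_sqrt_real_inner, hJvJv, Real.sqrt_one])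
    have hrange : Set.range ![v, J v] = {v, J v} := by
      ext x; simp [Fin.exists_fin_two]; tauto
    have hKrank : finrank ℝ K = 2 := by
      rw [hK, ← hrange, finrank_span_eq_card hONpair.linearIndependent]
      simp
    have hWrank : finrank ℝ W = 2 * n := by
      have h := Submodule.finrank_add_finrank_orthogonal (K := K)
      rw [hKrank, hdim, ← hW] at h
      omega
    -- restrict J and P to W
    set J' : W →ₗ[ℝ] W := J.restrict hJW with hJ'
    set P' : W →ₗ[ℝ] W := P.restrict hPW with hP'
    obtain ⟨e', lam', hpos', heig', hinn', horth'⟩ :=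
      IH W inferInstance inferInstance inferInstance J' P' hWrank
        (fun x => Subtype.ext (by
          simp [hJ', LinearMap.restrict_coe_apply, hJ2]))
        (fun x y => by
          simp only [Submodule.coe_inner, hJ', LinearMap.restrict_coe_apply]
          exact hJadj x y)
        (fun x y => by
          simp only [Submodule.coe_inner, hP', LinearMap.restrict_coe_apply]
          exact hPsym x y)
        (fun x hx => by
          have hx' : (x : V) ≠ 0 := fun h => hx (Subtype.ext h)
          have := hPpos x hx'
          simpa only [Submodule.coe_inner, hP', LinearMap.restrict_coe_apply] using this)
        (fun x => Subtype.ext (by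
          simp [hJ', hP', LinearMap.restrict_coe_apply, hrel]))
    refine ⟨Fin.cons v (fun k => (e' k : V)), Fin.cons μ lam', ?_, ?_, ?_, ?_⟩
    · intro k
      refine Fin.cases ?_ ?_ k
      · simpa using hμpos
      · intro k; simpa using hpos' k
    · intro k
      refine Fin.cases ?_ ?_ k
      · simpa using hPv
      · intro k
        have := congrArg (Subtype.val) (heig' k)
        simpa [hP', LinearMap.restrict_coe_apply] using this
    · intro k l
      refine Fin.cases ?_ ?_ k <;> [skip; intro k] <;> refine Fin.cases ?_ ?_ l
      · simpa using hvnorm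
      · intro l
        have h0 := ((memW (e' l)).mp (e' l).2).1
        simpa [Fin.succ_ne_zero, (Fin.succ_ne_zero l).symm] using h0
      · have h0 := ((memW (e' k)).mp (e' k).2).1
        rw [real_inner_comm] at h0
        simpa [Fin.succ_ne_zero] using h0
      · intro l
        have := hinn' k l
        rw [Submodule.coe_inner] at this
        simpa [Fin.succ_inj] using this
    · intro k l
      refine Fin.cases ?_ ?_ k <;> [skip; intro k] <;> refine Fin.cases ?_ ?_ l
      · simpa using hvJv
      · intro l
        have h0 := ((memW (J (e' l))).mp (hJW _ (e' l).2)).1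
        simpa using h0
      · have h0 := ((memW (e' k)).mp (e' k).2).2
        rw [real_inner_comm] at h0
        simpa using h0
      · intro l
        have := horth' k l
        rw [Submodule.coe_inner] at this
        simpa [hJ', LinearMap.restrict_coe_apply] using this


/-- Williamson-type diagonalization: a symmetric positive definite symplectic matrix is
diagonalized by a symplectic rotation, with diagonal `⊕ₖ diag(λₖ, λₖ⁻¹)`. -/
theorem posdef_symplectic_diagonalization {n : ℕ} (P : Matrix (Fin (2*n)) (Fin (2*n)) ℝ)
    (hsymm : P.IsSymm) (hpos : P.PosDef) (hsymp : IsSymplectic P) :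
    ∃ (U : Matrix (Fin (2*n)) (Fin (2*n)) ℝ) (lam : Fin n → ℝ),
      IsSymplectic U ∧ Uᵀ * U = 1 ∧ (∀ k, 0 < lam k) ∧
      P = Uᵀ * pairDiag lam * U := by
  classical
  set Jop : EuclideanSpace ℝ (Fin (2*n)) →ₗ[ℝ] EuclideanSpace ℝ (Fin (2*n)) := Matrix.toEuclideanLin (StdJ n) with hJop
  set Pop : EuclideanSpace ℝ (Fin (2*n)) →ₗ[ℝ] EuclideanSpace ℝ (Fin (2*n)) := Matrix.toEuclideanLin P with hPop
  have happ : ∀ (A : Matrix (Fin (2*n)) (Fin (2*n)) ℝ) (x : EuclideanSpace ℝ (Fin (2*n))) (i),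
      (Matrix.toEuclideanLin A x) i = ∑ j, A i j * x j := by
    intro A x i; rfl
  have hext : ∀ (x y : EuclideanSpace ℝ (Fin (2*n))), (∀ i, x i = y i) → x = y := by
    intro x y h; exact PiLp.ext h
  have hinner : ∀ x y : EuclideanSpace ℝ (Fin (2*n)), ⟪x, y⟫ = ∑ i, x i * y i := by
    intro x y
    simp [PiLp.inner_apply, RCLike.inner_apply, starRingEnd_apply, mul_comm]
  have hmulapp : ∀ (A B : Matrix (Fin (2*n)) (Fin (2*n)) ℝ) (x : EuclideanSpace ℝ (Fin (2*n))),
      Matrix.toEuclideanLin (A * B) x = Matrix.toEuclideanLin A (Matrix.toEuclideanLin B x) := by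
    intro A B x
    apply hext
    intro i
    simp only [happ, mul_apply, Finset.sum_mul, Finset.mul_sum]
    rw [Finset.sum_comm]
    exact Finset.sum_congr rfl fun j _ => Finset.sum_congr rfl fun k _ => by ring
  have hJT : ∀ i j, StdJ n j i = -(StdJ n i j) := by
    intro i j
    have h := congrFun (congrFun (StdJ_transpose n) i) j
    simpa [transpose_apply, Matrix.neg_apply] using h
  have hPT : ∀ i j, P j i = P i j := by
    intro i j
    have h := congrFun (congrFun hsymm.eq i) j
    simpa [transpose_apply] using h
  have hJ2 : ∀ x : EuclideanSpace ℝ (Fin (2*n)), Jop (Jop x) = -x := by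
    intro x
    rw [hJop, ← hmulapp, StdJ_mul_self]
    apply hext
    intro i
    simp only [happ]
    have : ∀ j : Fin (2*n), (-1 : Matrix (Fin (2*n)) (Fin (2*n)) ℝ) i j = -(if i = j then 1 else 0) := by
      intro j; simp [one_apply]
    simp only [this]
    simp [ite_mul, Finset.sum_ite_eq, Finset.mem_univ]
  have hJadj : ∀ x y : EuclideanSpace ℝ (Fin (2*n)), ⟪Jop x, y⟫ = -⟪x, Jop y⟫ := by
    intro x y
    rw [hinner, hinner, hJop]
    simp only [happ, Finset.sum_mul, Finset.mul_sum, ← Finset.sum_neg_distrib]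
    rw [Finset.sum_comm]
    exact Finset.sum_congr rfl fun i _ => Finset.sum_congr rfl fun j _ => by
      rw [hJT i j]; ring
  have hPsymm : ∀ x y : EuclideanSpace ℝ (Fin (2*n)), ⟪Pop x, y⟫ = ⟪x, Pop y⟫ := by
    intro x y
    rw [hinner, hinner, hPop]
    simp only [happ, Finset.sum_mul, Finset.mul_sum]
    rw [Finset.sum_comm]
    exact Finset.sum_congr rfl fun i _ => Finset.sum_congr rfl fun j _ => by
      rw [hPT i j]; ring
  have hPpos : ∀ x : EuclideanSpace ℝ (Fin (2*n)), x ≠ 0 → 0 < ⟪Pop x, x⟫ := by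
    intro x hx
    have hx' : (fun i => x i) ≠ (0 : Fin (2*n) → ℝ) := by
      intro hc
      apply hx
      apply hext
      intro i
      exact congrFun hc i
    have h := hpos.dotProduct_mulVec_pos hx'
    rw [hinner, hPop]
    simp only [happ]
    simp only [dotProduct, mulVec, Pi.star_apply, star_trivial, dotProduct] at h
    calc (0:ℝ) < ∑ i, x i * ∑ j, P i j * x j := h
    _ = ∑ i, (∑ j, P i j * x j) * x i := Finset.sum_congr rfl fun i _ => by ring
  have hPJP : P * StdJ n * P = StdJ n := by
    have h := hsymp
    rw [IsSymplectic, hsymm.eq] at h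
    exact h
  have hrel : ∀ x : EuclideanSpace ℝ (Fin (2*n)), Pop (Jop (Pop x)) = Jop x := by
    intro x
    rw [hPop, hJop, ← hmulapp, ← hmulapp, hPJP]
  have hdim' : finrank ℝ (EuclideanSpace ℝ (Fin (2*n))) = 2 * n := finrank_euclideanSpace_fin
  obtain ⟨e, lam, hlam, heig, hee, heJ⟩ :=
    williamson_key n (EuclideanSpace ℝ (Fin (2*n))) inferInstance inferInstance inferInstance Jop Pop hdim'
      hJ2 hJadj hPsymm hPpos hrel
  have hJiso : ∀ x y : EuclideanSpace ℝ (Fin (2*n)), ⟪Jop x, Jop y⟫ = ⟪x, y⟫ := by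
    intro x y
    rw [hJadj x (Jop y), hJ2, inner_neg_right, neg_neg]
  have hPJe : ∀ k, Pop (Jop (e k)) = (lam k)⁻¹ • Jop (e k) := by
    intro k
    have h := hrel (e k)
    rw [heig k, LinearMap.map_smul, LinearMap.map_smul] at h
    rw [eq_inv_smul_iff₀ (ne_of_gt (hlam k))]
    exact h
  set half : Fin (2*n) → Fin n := fun i => ⟨i.val / 2, by have := i.isLt; omega⟩ with hhalf
  set F : Fin (2*n) → EuclideanSpace ℝ (Fin (2*n)) :=
    fun i => if i.val % 2 = 0 then e (half i) else -(Jop (e (half i))) with hF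
  have hFeven : ∀ i : Fin (2*n), i.val % 2 = 0 → F i = e (half i) := by
    intro i h; rw [hF]; simp [h]
  have hFodd : ∀ i : Fin (2*n), ¬(i.val % 2 = 0) → F i = -(Jop (e (half i))) := by
    intro i h; rw [hF]; simp [h]
  have hhalfiff : ∀ i j : Fin (2*n), (half i = half j) ↔ (i.val / 2 = j.val / 2) := by
    intro i j; rw [hhalf]; simp [Fin.ext_iff]
  -- inner products of the F family
  have hFinner : ∀ i j, ⟪F i, F j⟫ = if i = j then 1 else 0 := by
    intro i j
    by_cases hi : i.val % 2 = 0 <;> by_cases hj : j.val % 2 = 0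
    · rw [hFeven i hi, hFeven j hj, hee]
      have hiffe : (half i = half j) ↔ (i = j) := by
        rw [hhalfiff, Fin.ext_iff]; omega
      simp only [hiffe]
    · rw [hFeven i hi, hFodd j hj, inner_neg_right, heJ, neg_zero]
      rw [if_neg (by intro h; rw [h] at hi; exact hj hi)]
    · rw [hFodd i hi, hFeven j hj, inner_neg_left, hJadj, heJ]
      rw [if_neg (by intro h; rw [h] at hi; exact hi hj)]
      norm_num
    · rw [hFodd i hi, hFodd j hj, inner_neg_left, inner_neg_right, neg_neg, hJiso, hee]
      have hiffe : (half i = half j) ↔ (i = j) := by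
        rw [hhalfiff, Fin.ext_iff]; omega
      simp only [hiffe]
  have hFJ : ∀ i j, ⟪F i, Jop (F j)⟫ = StdJ n i j := by
    intro i j
    by_cases hi : i.val % 2 = 0 <;> by_cases hj : j.val % 2 = 0
    · rw [hFeven i hi, hFeven j hj, heJ]
      simp only [StdJ, of_apply]
      rw [if_neg (by omega), if_neg (by omega)]
    · rw [hFeven i hi, hFodd j hj, map_neg, inner_neg_right, hJ2, inner_neg_right, neg_neg, hee]
      simp only [StdJ, of_apply, hhalf, Fin.mk.injEq]
      split_ifs <;> first | rfl | (exfalso; omega)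
    · rw [hFodd i hi, hFeven j hj, inner_neg_left, hJiso, hee]
      simp only [StdJ, of_apply, hhalf, Fin.mk.injEq]
      split_ifs <;> first | (exfalso; omega) | norm_num
    · rw [hFodd i hi, hFodd j hj, map_neg, inner_neg_left, inner_neg_right, neg_neg, hJiso, heJ]
      simp only [StdJ, of_apply]
      rw [if_neg (by omega), if_neg (by omega)]
  have hFP : ∀ j, Pop (F j) =
      (if j.val % 2 = 0 then lam (half j) else (lam (half j))⁻¹) • F j := by
    intro j
    by_cases hj : j.val % 2 = 0
    · rw [hFeven j hj, if_pos hj]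
      exact heig _
    · rw [hFodd j hj, if_neg hj, map_neg, hPJe, smul_neg]
  set U : Matrix (Fin (2*n)) (Fin (2*n)) ℝ := Matrix.of (fun i j => F i j) with hU
  have hUUT : U * Uᵀ = 1 := by
    ext i j
    have h := hFinner i j
    rw [hinner] at h
    simp only [mul_apply, transpose_apply, hU, of_apply, one_apply]
    exact h
  have hUTU : Uᵀ * U = 1 := mul_eq_one_comm.mp hUUT
  have hUJUT : U * StdJ n * Uᵀ = StdJ n := by
    ext i j
    have h := hFJ i j
    rw [hinner, hJop] at h
    simp only [happ] at h
    rw [Matrix.mul_assoc]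
    simp only [mul_apply, transpose_apply, hU, of_apply]
    exact h
  have hUPUT : U * P * Uᵀ = pairDiag lam := by
    ext i j
    have h : ⟪F i, Pop (F j)⟫ =
        (if i = j then (if i.val % 2 = 0 then lam (half i) else (lam (half i))⁻¹) else 0) := by
      rw [hFP j, real_inner_smul_right, hFinner]
      by_cases hc : i = j
      · subst hc; simp
      · simp [hc]
    rw [hinner, hPop] at h
    simp only [happ] at h
    rw [Matrix.mul_assoc]
    simp only [mul_apply, transpose_apply, hU, of_apply]
    rw [h]
    simp only [pairDiag, diagonal_apply, hhalf]
  refine ⟨U, lam, ?_, hUTU, hlam, ?_⟩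
  · show Uᵀ * StdJ n * U = StdJ n
    conv_lhs => rw [← hUJUT]
    exact sandwich_aux U (StdJ n) hUTU
  · rw [← hUPUT]
    exact (sandwich_aux U P hUTU).symm
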